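/- Let m ≥ 3, let A be a semi-symmetric strong M-tensor of order m and dimension n, let b ∈ ℝⁿ with b > 0, and let ε ∈ (0,1]. Then for every y ∈ F_ε, the Jacobian matrix f'(y) is a nonsingular M-matrix. -/

import Mathlib

open Finset Matrix Filter Topology

noncomputable section

/-- `(A x^{m-1})_i`: action of an `m`th-order `n`-dimensional tensor, stored with its first
index separated and `q = m-1` trailing indices:
`(A x^{m-1})_i = ∑_{i₂,…,i_m} a_{i i₂…i_m} x_{i₂}⋯x_{i_m}`. -/
def tApp {n q : ℕ} (A : Fin n → (Fin q → Fin n) → ℝ) (x : Fin n → ℝ) (i : Fin n) : ℝ :=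
  ∑ g : Fin q → Fin n, A i g * ∏ j, x (g j)

/-- Complex version of `tApp` (for eigenvalues). -/
def tAppC {n q : ℕ} (A : Fin n → (Fin q → Fin n) → ℝ) (x : Fin n → ℂ) (i : Fin n) : ℂ :=
  ∑ g : Fin q → Fin n, (A i g : ℂ) * ∏ j, x (g j)

/-- The identity tensor: entry `1` when all indices coincide, `0` otherwise. -/
def identT (n q : ℕ) : Fin n → (Fin q → Fin n) → ℝ :=
  fun i g => if ∀ j, g j = i then 1 else 0

/-- `lam ∈ ℂ` is an eigenvalue of the tensor `B`: there is a nonzero `x ∈ ℂⁿ` with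
`(B x^{m-1})_i = lam * x_i^{m-1}` for all `i`. -/
def IsTensorEigenvalue {n q : ℕ} (B : Fin n → (Fin q → Fin n) → ℝ) (lam : ℂ) : Prop :=
  ∃ x : Fin n → ℂ, x ≠ 0 ∧ ∀ i, tAppC B x i = lam * x i ^ q

/-- Semi-symmetry: the entries `a_{i i₂…i_m}` are invariant under permutations of `i₂,…,i_m`. -/
def IsSemiSymmetric {n q : ℕ} (A : Fin n → (Fin q → Fin n) → ℝ) : Prop :=
  ∀ (i : Fin n) (g : Fin q → Fin n) (σ : Equiv.Perm (Fin q)), A i (g ∘ σ) = A i g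

/-- Z-tensor: all off-diagonal entries are nonpositive. -/
def IsZTensor {n q : ℕ} (A : Fin n → (Fin q → Fin n) → ℝ) : Prop :=
  ∀ (i : Fin n) (g : Fin q → Fin n), ¬(∀ j, g j = i) → A i g ≤ 0

/-- Strong (nonsingular) M-tensor: `A = s·I − B` with `B ≥ 0` and `s > ρ(B)`,
i.e. `|λ| < s` for every eigenvalue `λ` of `B`. -/
def IsStrongMTensor {n q : ℕ} (A : Fin n → (Fin q → Fin n) → ℝ) : Prop :=
  ∃ (s : ℝ) (B : Fin n → (Fin q → Fin n) → ℝ),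
    (∀ i g, 0 ≤ B i g) ∧ (∀ i g, A i g = s * identT n q i g - B i g) ∧
    ∀ lam : ℂ, IsTensorEigenvalue B lam → ‖lam‖ < s

/-- Componentwise power `y^{[α]}`. -/
def cPow {n : ℕ} (y : Fin n → ℝ) (α : ℝ) : Fin n → ℝ := fun i => y i ^ α

/-- Euclidean norm on `Fin n → ℝ`. -/
def enorm2 {n : ℕ} (x : Fin n → ℝ) : ℝ := Real.sqrt (∑ i, x i ^ 2)

/-- The Jacobian matrix of a map `f : ℝⁿ → ℝⁿ` at `y`. -/
def jacM {n : ℕ} (f : (Fin n → ℝ) → Fin n → ℝ) (y : Fin n → ℝ) :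
    Matrix (Fin n) (Fin n) ℝ :=
  fun i j => fderiv ℝ (fun z => f z i) y (Pi.single j 1)

/-- `f(y) = A (y^{[1/(m-1)]})^{m-1} − b`, with `q = m−1`. -/
def fres {n q : ℕ} (A : Fin n → (Fin q → Fin n) → ℝ) (b : Fin n → ℝ)
    (y : Fin n → ℝ) : Fin n → ℝ :=
  fun i => tApp A (cPow y (1 / (q : ℝ))) i - b i

/-- Nonsingular M-matrix: nonpositive off-diagonal entries and `M = s·1 − N` with
`N ≥ 0` entrywise and `s` larger than the spectral radius of `N`. -/
def IsNonsingularMMatrix {k : Type} [Fintype k] [DecidableEq k] (M : Matrix k k ℝ) : Prop :=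
  (∀ i j, i ≠ j → M i j ≤ 0) ∧
  ∃ (s : ℝ) (N : Matrix k k ℝ), (∀ i j, 0 ≤ N i j) ∧
    M = s • (1 : Matrix k k ℝ) - N ∧
    ∀ μ ∈ spectrum ℂ (N.map (fun t : ℝ => (t : ℂ))), ‖μ‖ < s

/-- The feasible set `F_ε = {y > 0 : A (y^{[1/(m-1)]})^{m-1} ≥ ε b}`. -/
def FSet {n q : ℕ} (A : Fin n → (Fin q → Fin n) → ℝ) (b : Fin n → ℝ) (ε : ℝ) :
    Set (Fin n → ℝ) :=
  {y | (∀ i, 0 < y i) ∧ ∀ i, ε * b i ≤ tApp A (cPow y (1 / (q : ℝ))) i}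

/-- Acceptance of the trial steplength `t` in the line search: feasibility and
`‖f(y + t d)‖² ≤ (1 − 2σt)‖f(y)‖²`. -/
def StepOK {n q : ℕ} (A : Fin n → (Fin q → Fin n) → ℝ) (b : Fin n → ℝ)
    (Fb : Set (Fin n → ℝ)) (σ : ℝ) (y d : Fin n → ℝ) (t : ℝ) : Prop :=
  y + t • d ∈ Fb ∧
    enorm2 (fres A b (y + t • d)) ^ 2 ≤ (1 - 2 * σ * t) * enorm2 (fres A b y) ^ 2

/-- Newton's method (Algorithm 2.4 resp. 3.4) with feasible set `Fb`, never terminating: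
`y₀ ∈ Fb`; for every `k`, `f(y_k) ≠ 0`, `d_k` is the unique solution of
`f'(y_k) d = −f(y_k)`, `α_k = ρ^{i_k}` with `i_k` the least acceptable exponent, and
`y_{k+1} = y_k + α_k d_k`. -/
def NewtonIter {n q : ℕ} (A : Fin n → (Fin q → Fin n) → ℝ) (b : Fin n → ℝ)
    (Fb : Set (Fin n → ℝ)) (σ ρ : ℝ) (y d : ℕ → Fin n → ℝ) (α : ℕ → ℝ) : Prop :=
  y 0 ∈ Fb ∧ ∀ k : ℕ,
    fres A b (y k) ≠ 0 ∧
    jacM (fres A b) (y k) *ᵥ d k = -fres A b (y k) ∧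
    (∀ d', jacM (fres A b) (y k) *ᵥ d' = -fres A b (y k) → d' = d k) ∧
    (∃ ik : ℕ, α k = ρ ^ ik ∧ StepOK A b Fb σ (y k) (d k) (ρ ^ ik) ∧
      ∀ i < ik, ¬StepOK A b Fb σ (y k) (d k) (ρ ^ i)) ∧
    y (k + 1) = y k + α k • d k

/-- Submatrix of `M` with rows indexed by `{i // P i}` and columns by `{i // Q i}`. -/
def subMat {n : ℕ} (M : Matrix (Fin n) (Fin n) ℝ) (P Q : Fin n → Prop) :
    Matrix {i // P i} {i // Q i} ℝ :=
  fun i j => M i.1 j.1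

/-- `b` restricted to the index set `I₊ = {i : b_i > 0}`. -/
def bPlus {n : ℕ} (b : Fin n → ℝ) : {i : Fin n // 0 < b i} → ℝ := fun i => b i.1

/-- `F̄¹_ε = {y > 0 : (A(y^{[1/(m−1)]})^{m−1})_i ≥ ε b_i for all i ∈ I₊}`. -/
def FBar1 {n q : ℕ} (A : Fin n → (Fin q → Fin n) → ℝ) (b : Fin n → ℝ) (ε : ℝ) :
    Set (Fin n → ℝ) :=
  {y | (∀ i, 0 < y i) ∧ ∀ i, 0 < b i → ε * b i ≤ tApp A (cPow y (1 / (q : ℝ))) i}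

/-- `F̄²_{ε'} = {y > 0 : f'(y)_{I₊I₊} invertible and
`(A(y^{[1/(m−1)]})^{m−1})_{I₀} ≥ ε' f'(y)_{I₀I₊} f'(y)_{I₊I₊}⁻¹ b_{I₊}` componentwise}. -/
def FBar2 {n q : ℕ} (A : Fin n → (Fin q → Fin n) → ℝ) (b : Fin n → ℝ) (ε' : ℝ) :
    Set (Fin n → ℝ) :=
  {y | (∀ i, 0 < y i) ∧
    IsUnit (subMat (jacM (fres A b) y) (fun i => 0 < b i) (fun i => 0 < b i)) ∧
    ∀ i : {i : Fin n // b i = 0},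
      ε' * (subMat (jacM (fres A b) y) (fun i => b i = 0) (fun i => 0 < b i) *ᵥ
        ((subMat (jacM (fres A b) y) (fun i => 0 < b i) (fun i => 0 < b i))⁻¹ *ᵥ bPlus b)) i
        ≤ tApp A (cPow y (1 / (q : ℝ))) i.1}

/-- `F̄_{ε,ε'} = F̄¹_ε ∩ F̄²_{ε'}`. -/
def FBar {n q : ℕ} (A : Fin n → (Fin q → Fin n) → ℝ) (b : Fin n → ℝ) (ε ε' : ℝ) :
    Set (Fin n → ℝ) :=
  FBar1 A b ε ∩ FBar2 A b ε'

/-- For every `i ∈ I₀` there exist indices `i₂,…,i_m ∈ I₊` with `a_{i i₂…i_m} ≠ 0`. -/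
def I0Hyp {n q : ℕ} (A : Fin n → (Fin q → Fin n) → ℝ) (b : Fin n → ℝ) : Prop :=
  ∀ i : Fin n, b i = 0 → ∃ g : Fin q → Fin n, (∀ j, 0 < b (g j)) ∧ A i g ≠ 0

/-!
By Euler's identity for the map `y ↦ A (y^{[1/(m-1)]})^{m-1}`, which is positively homogeneous of
degree one, `f'(y) y = A (y^{[1/(m-1)]})^{m-1} ≥ ε b > 0` on `F_ε`, while the sign pattern of the
Z-tensor `A` makes the off-diagonal entries of `f'(y)` nonpositive. A matrix `M` with nonpositive
off-diagonal entries and `M y > 0` for some `y > 0` is a nonsingular M-matrix: for `s ≥ max M_ii`,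
`N = s·1 - M` is nonnegative with `N y < s y`, and a Gershgorin argument weighted by `y` puts
every eigenvalue of `N` inside the disc of radius `s`.
-/

theorem IsStrongMTensor.isZTensor {n q : ℕ} {A : Fin n → (Fin q → Fin n) → ℝ}
    (hA : IsStrongMTensor A) : IsZTensor A := by
  obtain ⟨s, B, hB, hAB, -⟩ := hA
  intro i g hg
  simpa [hAB i g, identT, hg] using hB i g

theorem hasFDerivAt_prod_rpow {ι σ : Type*} [Fintype ι] [DecidableEq ι] [Fintype σ]
    (g : ι → σ) (α : ℝ) {y : σ → ℝ} (hy : ∀ j, y (g j) ≠ 0) :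
    HasFDerivAt (fun z : σ → ℝ => ∏ j, z (g j) ^ α)
      (∑ j, (∏ j' ∈ univ.erase j, y (g j') ^ α) •
        (α * y (g j) ^ (α - 1)) •
          ContinuousLinearMap.proj (R := ℝ) (φ := fun _ : σ => ℝ) (g j)) y :=
  HasFDerivAt.finsetProd fun j _ => (hasFDerivAt_apply (g j) y).rpow_const (Or.inl (hy j))

theorem fderiv_prod_rpow_single_nonneg {ι σ : Type*} [Fintype ι] [DecidableEq ι] [Fintype σ]
    [DecidableEq σ] (g : ι → σ) {α : ℝ} (hα : 0 ≤ α) {y : σ → ℝ} (hy : ∀ j, 0 < y (g j))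
    (k : σ) : 0 ≤ fderiv ℝ (fun z : σ → ℝ => ∏ j, z (g j) ^ α) y (Pi.single k 1) := by
  rw [(hasFDerivAt_prod_rpow g α fun j => (hy j).ne').fderiv]
  simp only [FunLike.coe_sum, Finset.sum_apply, FunLike.coe_smul, Pi.smul_apply, ContinuousLinearMap.proj_apply, smul_eq_mul]
  have hsingle : ∀ j, (0 : ℝ) ≤ (Pi.single k (1 : ℝ) : σ → ℝ) (g j) := fun j => by
    rw [Pi.single_apply]; split_ifs <;> norm_num
  refine sum_nonneg fun j _ => mul_nonneg (prod_nonneg fun j' _ => ?_) ?_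
  · exact (Real.rpow_pos_of_pos (hy j') α).le
  · exact mul_nonneg (mul_nonneg hα (Real.rpow_pos_of_pos (hy j) _).le) (hsingle j)

theorem fderiv_prod_rpow_single_eq_zero {ι σ : Type*} [Fintype ι] [DecidableEq ι] [Fintype σ]
    [DecidableEq σ] (g : ι → σ) (α : ℝ) {y : σ → ℝ} (hy : ∀ j, y (g j) ≠ 0)
    {k : σ} (hk : ∀ j, g j ≠ k) :
    fderiv ℝ (fun z : σ → ℝ => ∏ j, z (g j) ^ α) y (Pi.single k 1) = 0 := by
  rw [(hasFDerivAt_prod_rpow g α hy).fderiv]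
  simp [Pi.single_eq_of_ne (hk _)]

theorem HasFDerivAt.apply_self_of_homogeneous {E F : Type*} [NormedAddCommGroup E]
    [NormedSpace ℝ E] [NormedAddCommGroup F] [NormedSpace ℝ F] {f : E → F} {f' : E →L[ℝ] F}
    {y : E} (hf : HasFDerivAt f f' y) (hhom : ∀ t : ℝ, 0 < t → f (t • y) = t • f y) :
    f' y = f y := by
  have hray : HasDerivAt (fun t : ℝ => f (t • y)) (f' y) 1 := by
    have hf1 : HasFDerivAt f f' ((1 : ℝ) • y) := by rwa [one_smul]
    simpa [Function.comp_def] using hf1.comp_hasDerivAt (1 : ℝ) ((hasDerivAt_id 1).smul_const y)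
  have hlin : HasDerivAt (fun t : ℝ => t • f y) (f y) 1 := by
    simpa using (hasDerivAt_id (1 : ℝ)).smul_const (f y)
  refine hray.unique (hlin.congr_of_eventuallyEq ?_)
  filter_upwards [lt_mem_nhds one_pos] with t ht using hhom t ht

theorem jacM_mulVec_apply {n : ℕ} (f : (Fin n → ℝ) → Fin n → ℝ) (y v : Fin n → ℝ) (i : Fin n) :
    (jacM f y *ᵥ v) i = fderiv ℝ (fun z => f z i) y v := by
  conv_rhs => rw [← Finset.univ_sum_single v]
  simp only [mulVec, dotProduct, jacM, map_sum]
  refine sum_congr rfl fun k _ => ?_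
  rw [mul_comm, ← smul_eq_mul, ← map_smul, ← Pi.single_smul', smul_eq_mul, mul_one]

theorem Matrix.exists_mulVec_eq_smul_of_mem_spectrum {K k : Type*} [Field K] [Fintype k]
    [DecidableEq k] {M : Matrix k k K} {μ : K} (hμ : μ ∈ spectrum K M) :
    ∃ v ≠ 0, M *ᵥ v = μ • v := by
  rw [← Matrix.spectrum_toLin', ← Module.End.hasEigenvalue_iff_mem_spectrum] at hμ
  obtain ⟨v, hv⟩ := hμ.exists_hasEigenvector
  exact ⟨v, hv.2, by simpa using Module.End.mem_eigenspace_iff.1 hv.1⟩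

theorem Matrix.norm_lt_of_mem_spectrum_of_mulVec_lt {k : Type*} [Fintype k] [DecidableEq k]
    {N : Matrix k k ℝ} (hN : ∀ i j, 0 ≤ N i j) {y : k → ℝ} (hy : ∀ i, 0 < y i) {s : ℝ}
    (hNy : ∀ i, (N *ᵥ y) i < s * y i) {μ : ℂ}
    (hμ : μ ∈ spectrum ℂ (N.map (fun t : ℝ => (t : ℂ)))) : ‖μ‖ < s := by
  obtain ⟨v, hv0, hv⟩ := Matrix.exists_mulVec_eq_smul_of_mem_spectrum hμ
  obtain ⟨j, hj⟩ := Function.ne_iff.1 hv0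
  -- Weighted Gershgorin: look at the row where `‖v i‖ / y i` is maximal.
  obtain ⟨i, -, hi⟩ := exists_max_image univ (fun i => ‖v i‖ / y i) ⟨j, mem_univ j⟩
  set c := ‖v i‖ / y i
  have hc : 0 < c := (div_pos (norm_pos_iff.2 hj) (hy j)).trans_le (hi j (mem_univ j))
  have hvc : ∀ j, ‖v j‖ ≤ c * y j := fun j => (div_le_iff₀ (hy j)).1 (hi j (mem_univ j))
  have hvi : ‖v i‖ = c * y i := (div_mul_cancel₀ _ (hy i).ne').symm
  have key : ‖μ‖ * (c * y i) < s * (c * y i) :=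
    calc ‖μ‖ * (c * y i) = ‖∑ j, (N i j : ℂ) * v j‖ := by
          rw [← hvi, ← norm_mul, ← smul_eq_mul, ← Pi.smul_apply, ← hv]; rfl
      _ ≤ ∑ j, N i j * ‖v j‖ := (norm_sum_le _ _).trans_eq <| sum_congr rfl fun j _ => by
          rw [norm_mul, Complex.norm_real, Real.norm_of_nonneg (hN i j)]
      _ ≤ ∑ j, N i j * (c * y j) :=
          sum_le_sum fun j _ => mul_le_mul_of_nonneg_left (hvc j) (hN i j)
      _ = c * (N *ᵥ y) i := by
          simp only [mulVec, dotProduct, mul_sum]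
          exact sum_congr rfl fun j _ => by ring
      _ < c * (s * y i) := mul_lt_mul_of_pos_left (hNy i) hc
      _ = s * (c * y i) := by ring
  exact lt_of_mul_lt_mul_right key (mul_pos hc (hy i)).le

theorem isNonsingularMMatrix_of_mulVec_pos {k : Type} [Fintype k] [DecidableEq k]
    {M : Matrix k k ℝ} (hoff : ∀ i j, i ≠ j → M i j ≤ 0) {y : k → ℝ} (hy : ∀ i, 0 < y i)
    (hMy : ∀ i, 0 < (M *ᵥ y) i) : IsNonsingularMMatrix M := by
  set s := ∑ i, |M i i|
  have hdiag : ∀ i, M i i ≤ s := fun i =>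
    (le_abs_self _).trans (single_le_sum (fun j _ => abs_nonneg (M j j)) (mem_univ i))
  have hN : ∀ i j, 0 ≤ (s • 1 - M) i j := by
    intro i j
    by_cases hij : i = j
    · subst hij
      simpa using hdiag i
    · simpa [one_apply_ne hij] using hoff i j hij
  have hNy : ∀ i, ((s • 1 - M) *ᵥ y) i < s * y i := by
    intro i
    simpa [sub_mulVec, smul_mulVec] using hMy i
  exact ⟨hoff, s, s • 1 - M, hN, (sub_sub_cancel _ _).symm,
    fun μ hμ => norm_lt_of_mem_spectrum_of_mulVec_lt hN hy hNy hμ⟩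

section Tensor

variable {n q : ℕ} (A : Fin n → (Fin q → Fin n) → ℝ)

theorem tApp_smul (c : ℝ) (x : Fin n → ℝ) (i : Fin n) :
    tApp A (c • x) i = c ^ q * tApp A x i := by
  simp only [tApp, mul_sum, Pi.smul_apply, smul_eq_mul, prod_mul_distrib, prod_const, card_univ,
    Fintype.card_fin]
  exact sum_congr rfl fun g _ => by ring

theorem cPow_smul {t : ℝ} (ht : 0 ≤ t) {y : Fin n → ℝ} (hy : ∀ i, 0 ≤ y i) (α : ℝ) :
    cPow (t • y) α = t ^ α • cPow y α :=
  funext fun i => Real.mul_rpow ht (hy i)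

theorem tApp_cPow_smul (hq : q ≠ 0) {t : ℝ} (ht : 0 ≤ t) {y : Fin n → ℝ} (hy : ∀ i, 0 ≤ y i)
    (i : Fin n) :
    tApp A (cPow (t • y) (1 / q)) i = t * tApp A (cPow y (1 / q)) i := by
  rw [cPow_smul ht hy, tApp_smul, one_div, Real.rpow_inv_natCast_pow ht hq]

theorem hasFDerivAt_tApp_cPow (α : ℝ) {y : Fin n → ℝ} (hy : ∀ i, y i ≠ 0) (i : Fin n) :
    HasFDerivAt (fun z => tApp A (cPow z α) i)
      (∑ g, A i g • fderiv ℝ (fun z : Fin n → ℝ => ∏ j, z (g j) ^ α) y) y :=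
  HasFDerivAt.fun_sum fun g _ =>
    ((hasFDerivAt_prod_rpow g α fun j => hy (g j)).differentiableAt.hasFDerivAt).const_mul (A i g)

theorem fderiv_fres_apply (b y : Fin n → ℝ) (i : Fin n) :
    fderiv ℝ (fun z => fres A b z i) y = fderiv ℝ (fun z => tApp A (cPow z (1 / q)) i) y :=
  fderiv_sub_const _

theorem jacM_fres_apply (b : Fin n → ℝ) {y : Fin n → ℝ} (hy : ∀ i, y i ≠ 0) (i k : Fin n) :
    jacM (fres A b) y i k =
      ∑ g, A i g *
        fderiv ℝ (fun z : Fin n → ℝ => ∏ j, z (g j) ^ (1 / q : ℝ)) y (Pi.single k 1) := by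
  rw [jacM, fderiv_fres_apply, (hasFDerivAt_tApp_cPow A _ hy i).fderiv]
  simp

theorem jacM_fres_nonpos_of_ne {A : Fin n → (Fin q → Fin n) → ℝ} (hA : IsZTensor A)
    (b : Fin n → ℝ) {y : Fin n → ℝ} (hy : ∀ i, 0 < y i) {i k : Fin n} (hik : i ≠ k) :
    jacM (fres A b) y i k ≤ 0 := by
  rw [jacM_fres_apply A b fun i => (hy i).ne']
  refine sum_nonpos fun g _ => ?_
  by_cases hg : ∀ j, g j = i
  · rw [fderiv_prod_rpow_single_eq_zero g _ (fun j => (hy _).ne') fun j => hg j ▸ hik, mul_zero]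
  · exact mul_nonpos_of_nonpos_of_nonneg (hA i g hg)
      (fderiv_prod_rpow_single_nonneg g (by positivity) (fun j => hy _) k)

theorem jacM_fres_mulVec_self (hq : q ≠ 0) (b : Fin n → ℝ) {y : Fin n → ℝ} (hy : ∀ i, 0 < y i) :
    jacM (fres A b) y *ᵥ y = tApp A (cPow y (1 / q)) := by
  funext i
  rw [jacM_mulVec_apply, fderiv_fres_apply]
  exact (hasFDerivAt_tApp_cPow A _ (fun i => (hy i).ne') i).differentiableAt.hasFDerivAt
    |>.apply_self_of_homogeneous fun t ht => tApp_cPow_smul A hq ht.le (fun i => (hy i).le) i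

end Tensor

theorem jacobian_nonsingular_M_on_FSet_general {m n : ℕ} (hm : 3 ≤ m)
    (A : Fin n → (Fin (m - 1) → Fin n) → ℝ)
    (hM : IsStrongMTensor A)
    (b : Fin n → ℝ) (hb : ∀ i, 0 < b i)
    (ε : ℝ) (hε0 : 0 < ε) :
    ∀ y ∈ FSet A b ε, IsNonsingularMMatrix (jacM (fres A b) y) := by
  rintro y ⟨hy, hfeas⟩
  refine isNonsingularMMatrix_of_mulVec_pos
    (fun i k hik => jacM_fres_nonpos_of_ne hM.isZTensor b hy hik) hy fun i => ?_
  rw [jacM_fres_mulVec_self A (by omega) b hy]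
  exact (mul_pos hε0 (hb i)).trans_le (hfeas i)

theorem jacobian_nonsingular_M_on_FSet {m n : ℕ} (hm : 3 ≤ m)
    (A : Fin n → (Fin (m - 1) → Fin n) → ℝ)
    (hsym : IsSemiSymmetric A) (hM : IsStrongMTensor A)
    (b : Fin n → ℝ) (hb : ∀ i, 0 < b i)
    (ε : ℝ) (hε0 : 0 < ε) (hε1 : ε ≤ 1) :
    ∀ y ∈ FSet A b ε, IsNonsingularMMatrix (jacM (fres A b) y) :=
  jacobian_nonsingular_M_on_FSet_general hm A hM b hb ε hε0
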